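/- arXiv:2508.13083 — 3 statements merged into one kernel-verified Lean document; each statement's English description precedes it below -/
import Mathlib

section
/- For any constant 0 ≤ α < 1 with λ ≤ α/(Δ−1) and Δ ≥ 2, there exists a probability p ∈ (0,1] and a constant c < 1 such that 1 − p + p·(Δ·p·λ/(1+λ)) + Δ·p·λ/(1+λ) ≤ c. -/
/-- Coupling inequality for the hardcore model: for any constant `0 ≤ α < 1` with
`λ ≤ α/(Δ-1)` and `Δ ≥ 2`, there is an activation probability `p ∈ (0,1]` and a
constant `c < 1` bounding the expected Hamming distance after one coupled step. -/
theorem stmt_0 (α lam : ℝ) (Δ : ℕ) (hα0 : 0 ≤ α) (hα1 : α < 1) (hΔ : 2 ≤ Δ)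
    (hlam0 : 0 ≤ lam) (hlam : lam ≤ α / ((Δ : ℝ) - 1)) :
    ∃ p c : ℝ, 0 < p ∧ p ≤ 1 ∧ c < 1 ∧
      1 - p + p * ((Δ : ℝ) * p * lam / (1 + lam)) + (Δ : ℝ) * p * lam / (1 + lam) ≤ c := by
  set D : ℝ := (Δ : ℝ) with hD
  have hD2 : (2 : ℝ) ≤ D := by rw [hD]; exact_mod_cast hΔ
  have hD1 : (0 : ℝ) < D - 1 := by linarith
  have hden : (0 : ℝ) < D - 1 + α := by linarith
  have hlam' : lam * (D - 1) ≤ α := by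
    rw [div_eq_mul_inv] at hlam
    calc lam * (D - 1) ≤ (α * (D - 1)⁻¹) * (D - 1) := by
          apply mul_le_mul_of_nonneg_right hlam (le_of_lt hD1)
      _ = α := by field_simp
  set q : ℝ := D * α / (D - 1 + α) with hq
  have hq0 : 0 ≤ q := div_nonneg (by positivity) (le_of_lt hden)
  have hq1 : q < 1 := by
    rw [hq, div_lt_one hden]
    nlinarith
  have h1lam : (0 : ℝ) < 1 + lam := by linarith
  set K : ℝ := D * lam / (1 + lam) with hK
  have hK0 : 0 ≤ K := div_nonneg (by positivity) (le_of_lt h1lam)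
  have hKq : K ≤ q := by
    rw [hK, hq, div_le_div_iff₀ h1lam hden]
    nlinarith
  refine ⟨(1 - q) / 2, 1 - ((1 - q) / 2) ^ 2, by linarith, by linarith, by nlinarith, ?_⟩
  have hrw1 : ((1 - q) / 2) * (D * ((1 - q) / 2) * lam / (1 + lam)) = ((1 - q) / 2) ^ 2 * K := by
    rw [hK]; field_simp
  have hrw2 : D * ((1 - q) / 2) * lam / (1 + lam) = ((1 - q) / 2) * K := by
    rw [hK]; field_simp
  rw [hrw1, hrw2]
  nlinarith [sq_nonneg ((1 - q) / 2), mul_le_mul_of_nonneg_left hKq (sq_nonneg ((1 - q) / 2)),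
    mul_le_mul_of_nonneg_left hKq (by linarith : (0:ℝ) ≤ (1 - q) / 2)]
end

section
/- For real q ≥ αΔ with α > 2 and integers Δ ≥ 1, q ≥ 3, there exists p ∈ (0,1] such that 1 − p·((q−Δ)/q)·(1 − p + p·(q−3)/q)^Δ + Δp/q < 1. -/
/-- Coupling inequality for the Potts model: for real `q ≥ α·Δ` with `α > 2`,
`Δ ≥ 1` an integer, and `q ≥ 3`, there is an activation probability `p ∈ (0,1]`
making the expected Hamming distance bound strictly less than 1. -/
theorem stmt_1 (α q : ℝ) (Δ : ℕ) (hα : 2 < α) (hΔ : 1 ≤ Δ) (hq3 : 3 ≤ q)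
    (hq : α * (Δ : ℝ) ≤ q) :
    ∃ p : ℝ, 0 < p ∧ p ≤ 1 ∧
      1 - p * ((q - (Δ : ℝ)) / q) * (1 - p + p * (q - 3) / q) ^ Δ + (Δ : ℝ) * p / q < 1 := by
  set D : ℝ := (Δ : ℝ) with hDdef
  have hD1 : (1:ℝ) ≤ D := by rw [hDdef]; exact_mod_cast hΔ
  have hq0 : (0:ℝ) < q := by linarith
  have h2D : 2 * D < q := by nlinarith
  have hqD : (0:ℝ) < q - D := by linarith
  have hD0 : (0:ℝ) < D := by linarith
  set c : ℝ := q * (q - 2*D) / (6 * D * (q - D)) with hc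
  have hc0 : 0 < c := by
    apply div_pos
    · nlinarith
    · positivity
  refine ⟨min c 1, lt_min hc0 one_pos, min_le_right _ _, ?_⟩
  set p := min c 1 with hpdef
  have hp0 : 0 < p := lt_min hc0 one_pos
  have hpc : p ≤ c := min_le_left _ _
  have hp1 : p ≤ 1 := min_le_right _ _
  have hform : 1 - p + p * (q - 3) / q = 1 + (-(3*p/q)) := by
    field_simp
    ring
  have ha : (-2:ℝ) ≤ -(3*p/q) := by
    have h1 : 3*p/q ≤ 1 := by
      rw [div_le_one hq0]; linarith
    linarith
  have hbern : 1 + (Δ : ℝ) * (-(3*p/q)) ≤ (1 + (-(3*p/q)))^Δ := one_add_mul_le_pow ha Δ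
  rw [hform]
  set X : ℝ := (1 + (-(3*p/q)))^Δ with hX
  rw [← hDdef] at hbern
  -- from p ≤ c : 3*p*D*(q-D)/q ≤ (q-2D)/2
  have h3 : 3 * p * D * (q - D) ≤ q * (q - 2*D) / 2 := by
    have := mul_le_mul_of_nonneg_right hpc (le_of_lt (by positivity : (0:ℝ) < 6 * D * (q - D)))
    rw [hc, div_mul_cancel₀] at this
    · nlinarith
    · positivity
  have hkey : D < (q - D) * X := by
    have h4 : (q - D) * (1 + D * (-(3*p/q))) ≥ q / 2 := by
      have heq : (q - D) * (D * (3*p/q)) = 3 * p * D * (q - D) / q := by ring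
      have : (q - D) * (D * (3*p/q)) ≤ (q - 2*D)/2 := by
        rw [heq, div_le_div_iff₀ hq0 two_pos]
        nlinarith
      nlinarith
    have h5 : (q - D) * (1 + D * (-(3*p/q))) ≤ (q - D) * X :=
      mul_le_mul_of_nonneg_left hbern (le_of_lt hqD)
    linarith
  have hfinal : D * p / q < p * ((q - D) / q) * X := by
    have e1 : D * p / q = (p/q) * D := by ring
    have e2 : p * ((q - D) / q) * X = (p/q) * ((q - D) * X) := by ring
    rw [e1, e2]
    exact (mul_lt_mul_iff_right₀ (by positivity)).mpr hkey
  linarith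
end

section
/- Consider the Gibbs distribution where each vertex v of a finite simple graph G on n vertices receives a label from [3n] ∪ N(v), and the Hamiltonian counts edges {u,v} whose endpoints receive the same vertex as label. Then Z(0) = ∏_v (3n + deg(v)), and Z(0) > lim_{β→∞} Z(β) if and only if G contains a triangle. -/
open Finset Filter

/-- The triangle-detection Gibbs distribution: labelings assign each vertex `v` a
label in `[3n] ∪ N(v)`, and the Hamiltonian counts edges whose endpoints receive the
same vertex label.  Then `Z(0) = ∏_v (3n + deg v)`, `Z(β)` converges as `β → ∞`,
and `Z(0)` strictly exceeds the limit iff `G` contains a triangle. -/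
theorem stmt_12 {V : Type*} [Fintype V] [DecidableEq V] (G : SimpleGraph V)
    [DecidableRel G.Adj] (n : ℕ) (hcard : Fintype.card V = n) (hn : 1 ≤ n) :
    ∃ L : ℝ,
      Tendsto
        (fun β : ℝ => ∑ f ∈ Finset.univ.filter (fun f : V → (Fin (3 * n) ⊕ V) =>
            ∀ v w : V, f v = Sum.inr w → G.Adj v w),
          Real.exp (-β *
            (({e ∈ G.edgeSet | ∃ u v : V, e = s(u, v) ∧ f u = f v ∧
                ∃ w : V, f u = Sum.inr w}.ncard : ℕ) : ℝ)))
        atTop (nhds L) ∧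
      (∑ f ∈ Finset.univ.filter (fun f : V → (Fin (3 * n) ⊕ V) =>
            ∀ v w : V, f v = Sum.inr w → G.Adj v w),
          Real.exp (-(0 : ℝ) *
            (({e ∈ G.edgeSet | ∃ u v : V, e = s(u, v) ∧ f u = f v ∧
                ∃ w : V, f u = Sum.inr w}.ncard : ℕ) : ℝ))) =
        ∏ v : V, ((3 * n + G.degree v : ℕ) : ℝ) ∧
      ((L <
        ∑ f ∈ Finset.univ.filter (fun f : V → (Fin (3 * n) ⊕ V) =>
            ∀ v w : V, f v = Sum.inr w → G.Adj v w),
          Real.exp (-(0 : ℝ) *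
            (({e ∈ G.edgeSet | ∃ u v : V, e = s(u, v) ∧ f u = f v ∧
                ∃ w : V, f u = Sum.inr w}.ncard : ℕ) : ℝ))) ↔
        ∃ a b c : V, G.Adj a b ∧ G.Adj b c ∧ G.Adj a c) := by
  classical
  set S : Finset (V → Fin (3 * n) ⊕ V) :=
    Finset.univ.filter (fun f : V → (Fin (3 * n) ⊕ V) =>
      ∀ v w : V, f v = Sum.inr w → G.Adj v w) with hS
  set H : (V → Fin (3 * n) ⊕ V) → ℕ := fun f =>
    ({e ∈ G.edgeSet | ∃ u v : V, e = s(u, v) ∧ f u = f v ∧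
        ∃ w : V, f u = Sum.inr w}.ncard : ℕ) with hH
  -- Z(0) = S.card
  have hZ0 : (∑ f ∈ S, Real.exp (-(0 : ℝ) * (H f : ℝ))) = (S.card : ℝ) := by
    simp [Real.exp_zero]
  -- S.card = ∏ (3n + deg v)
  have hcount : (S.card : ℝ) = ∏ v : V, ((3 * n + G.degree v : ℕ) : ℝ) := by
    have h1 : S.card = Fintype.card
        {f : V → Fin (3 * n) ⊕ V // ∀ v w : V, f v = Sum.inr w → G.Adj v w} := by
      rw [Fintype.card_subtype]
    have h2 : Fintype.card
        {f : V → Fin (3 * n) ⊕ V // ∀ v w : V, f v = Sum.inr w → G.Adj v w}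
        = ∏ v : V, (3 * n + G.degree v) := by
      have e1 : {f : V → Fin (3 * n) ⊕ V // ∀ v w : V, f v = Sum.inr w → G.Adj v w}
          ≃ ∀ v : V, {x : Fin (3 * n) ⊕ V // ∀ w : V, x = Sum.inr w → G.Adj v w} :=
        Equiv.subtypePiEquivPi (p := fun v x => ∀ w : V, x = Sum.inr w → G.Adj v w)
      rw [Fintype.card_congr e1, Fintype.card_pi]
      refine Finset.prod_congr rfl fun v _ => ?_
      have e2 : {x : Fin (3 * n) ⊕ V // ∀ w : V, x = Sum.inr w → G.Adj v w}
          ≃ {a : Fin (3 * n) // ∀ w : V, Sum.inl a = Sum.inr w → G.Adj v w}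
            ⊕ {b : V // ∀ w : V, (Sum.inr b : Fin (3 * n) ⊕ V) = Sum.inr w → G.Adj v w} :=
        Equiv.subtypeSum
      rw [Fintype.card_congr e2, Fintype.card_sum]
      congr 1
      · rw [Fintype.card_congr (Equiv.subtypeUnivEquiv (fun a w h => by simp at h))]
        exact Fintype.card_fin _
      · have e3 : {b : V // ∀ w : V, (Sum.inr b : Fin (3 * n) ⊕ V) = Sum.inr w → G.Adj v w}
            ≃ {b : V // G.Adj v b} := by
          refine Equiv.subtypeEquivRight fun b => ?_
          constructor
          · intro h; exact h b rfl
          · rintro h w hw; cases Sum.inr_injective hw; exact h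
        rw [Fintype.card_congr e3, ← SimpleGraph.card_neighborSet_eq_degree]
        rfl
    rw [h1, h2]; push_cast; rfl
  refine ⟨((S.filter fun f => H f = 0).card : ℝ), ?_, hZ0.trans hcount, ?_⟩
  · -- tendsto
    have key : Tendsto (fun β : ℝ => ∑ f ∈ S, Real.exp (-β * (H f : ℝ))) atTop
        (nhds (∑ f ∈ S, if H f = 0 then (1 : ℝ) else 0)) := by
      refine tendsto_finset_sum _ fun f _ => ?_
      by_cases h : H f = 0
      · simp [h]
      · rw [if_neg h]
        have hc : (0 : ℝ) < (H f : ℝ) := by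
          exact_mod_cast Nat.pos_of_ne_zero h
        have h1 : Tendsto (fun β : ℝ => -β * (H f : ℝ)) atTop atBot := by
          have h0 : Tendsto (fun β : ℝ => β * (H f : ℝ)) atTop atTop := tendsto_id.atTop_mul_const hc
          have := tendsto_neg_atBot_iff.2 h0
          simpa [neg_mul] using this
        exact Real.tendsto_exp_atBot.comp h1
      -- done
    have hsum : (∑ f ∈ S, if H f = 0 then (1 : ℝ) else 0)
        = ((S.filter fun f => H f = 0).card : ℝ) := by
      rw [Finset.sum_boole]
    rw [hsum] at key
    exact key
  · -- iff
    rw [hZ0]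
    have hsub : (S.filter fun f => H f = 0) ⊆ S := Finset.filter_subset _ _
    constructor
    · intro hlt
      have hlt' : (S.filter fun f => H f = 0).card < S.card := by exact_mod_cast hlt
      have hne : (S.filter fun f => H f = 0) ≠ S := fun h => by
        rw [h] at hlt'; exact lt_irrefl _ hlt'
      obtain ⟨f, hfS, hf⟩ : ∃ f ∈ S, ¬ H f = 0 := by
        by_contra hall
        push_neg at hall
        exact hne (Finset.filter_true_of_mem hall)
      have hadm : ∀ v w : V, f v = Sum.inr w → G.Adj v w := by
        rw [hS, Finset.mem_filter] at hfS; exact hfS.2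
      obtain ⟨e, he⟩ := Set.nonempty_of_ncard_ne_zero hf
      obtain ⟨heE, u, v, rfl, hfuv, w, hfw⟩ := he
      have hadjuv : G.Adj u v := (G.mem_edgeSet).1 heE
      exact ⟨u, v, w, hadjuv, hadm v w (hfuv ▸ hfw), hadm u w hfw⟩
    · rintro ⟨a, b, c, hab, hbc, hac⟩
      have h3n : 0 < 3 * n := by omega
      set f : V → Fin (3 * n) ⊕ V :=
        fun x => if x = a ∨ x = b then Sum.inr c else Sum.inl ⟨0, h3n⟩ with hf
      have hfS : f ∈ S := by
        rw [hS, Finset.mem_filter]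
        refine ⟨Finset.mem_univ _, fun v w hvw => ?_⟩
        rw [hf] at hvw
        by_cases hv : v = a ∨ v = b
        · simp only [hv, if_true] at hvw
          cases Sum.inr_injective hvw
          rcases hv with rfl | rfl
          · exact hac
          · exact hbc
        · simp [hv] at hvw
      have hfa : f a = Sum.inr c := by simp [hf]
      have hfb : f b = Sum.inr c := by simp [hf]
      have hHf : H f ≠ 0 := by
        have hmem : s(a, b) ∈ {e ∈ G.edgeSet | ∃ u v : V, e = s(u, v) ∧ f u = f v ∧
            ∃ w : V, f u = Sum.inr w} :=
          ⟨(G.mem_edgeSet).2 hab, a, b, rfl, hfa.trans hfb.symm, c, hfa⟩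
        have hfin : ({e ∈ G.edgeSet | ∃ u v : V, e = s(u, v) ∧ f u = f v ∧
            ∃ w : V, f u = Sum.inr w} : Set (Sym2 V)).Finite := Set.toFinite _
        exact (Set.ncard_pos hfin).2 ⟨_, hmem⟩ |>.ne'
      have hssub : (S.filter fun f => H f = 0) ⊂ S := by
        refine Finset.ssubset_iff_of_subset hsub |>.2 ⟨f, hfS, ?_⟩
        simp [hHf]
      exact_mod_cast Finset.card_lt_card hssub
end
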